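/- Let n ≥ 2 and let Q ∈ F_n with coefficients a_0 = 1, a_1, ..., a_n. Then Q does not have two consecutive zero coefficients: there is no j with 1 ≤ j ≤ n−1 such that a_j = 0 and a_{j+1} = 0. -/

import Mathlib

/-!
Over `ℝ` the polynomial `Q` splits. If the coefficients of `x^m` and `x^(m+1)` vanish, then `0` is
a double root of `Q⁽ᵐ⁾`. Derivatives of split real polynomials split, and a split `p` admits no
multiple root of `p'` outside the zero set of `p`: Rolle puts a distinct root of `p'` strictly
between any two consecutive roots of `p`, a root of `p` of multiplicity `k` is a root of `p'` of
multiplicity `k - 1`, and these already exhaust `deg p' = deg p - 1`. So the double root at `0`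
descends from `Q⁽ᵐ⁾` to `Q`, contradicting `xᵢ ≠ 0`.
-/

open Polynomial

namespace Finset

theorem card_add_one_le_sum_of_two_le {ι : Type*} {s : Finset ι} {f : ι → ℕ} {a : ι}
    (hf : ∀ x ∈ s, 1 ≤ f x) (ha : a ∈ s) (h2 : 2 ≤ f a) :
    #s + 1 ≤ ∑ x ∈ s, f x := by
  classical
  rw [← add_sum_erase s f ha, ← card_erase_add_one ha]
  have : #(s.erase a) ≤ ∑ x ∈ s.erase a, f x := by
    simpa using card_nsmul_le_sum (s.erase a) f 1 fun x hx => hf x (mem_of_mem_erase hx)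
  omega

end Finset

namespace Polynomial

theorem X_pow_dvd_iterate_derivative {R : Type*} [Semiring R] {p : R[X]} {j m : ℕ}
    (h : ∀ d < j, p.coeff (d + m) = 0) : X ^ j ∣ derivative^[m] p :=
  X_pow_dvd_iff.2 fun d hd => by rw [coeff_iterate_derivative, h d hd, smul_zero]

theorem iterate_derivative_ne_zero {R : Type*} [Semiring R] [Module.IsTorsionFree ℕ R] {p : R[X]}
    (hp : p ≠ 0) {k : ℕ} (hk : k ≤ p.natDegree) : derivative^[k] p ≠ 0 := by
  intro h
  have hcoeff := congrArg (coeff · (p.natDegree - k)) h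
  simp only [coeff_iterate_derivative, Nat.sub_add_cancel hk, coeff_zero] at hcoeff
  exact smul_ne_zero (Nat.descFactorial_pos.2 hk).ne' (leadingCoeff_ne_zero.2 hp) hcoeff

theorem card_roots_le_card_roots_derivative_of_two_le_rootMultiplicity {p : ℝ[X]} {a : ℝ}
    (hpa : ¬p.IsRoot a) (ha : 2 ≤ p.derivative.rootMultiplicity a) :
    Multiset.card p.roots ≤ Multiset.card p.derivative.roots := by
  classical
  have hp' : p.derivative ≠ 0 := by rintro h; simp [h] at ha
  have hp : p ≠ 0 := by rintro rfl; simp at hpa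
  set S := p.roots.toFinset
  set T := p.derivative.roots.toFinset
  have haTS : a ∈ T \ S := by
    simpa [S, T, hp, hp'] using ⟨(rootMultiplicity_pos hp').1 (by omega), hpa⟩
  calc Multiset.card p.roots = ∑ x ∈ S, p.roots.count x :=
        (Multiset.toFinset_sum_count_eq _).symm
    _ ≤ ∑ x ∈ S, (p.derivative.roots.count x + 1) := by
        gcongr with x
        rw [count_roots, count_roots]
        have := rootMultiplicity_sub_one_le_derivative_rootMultiplicity p x
        omega
    _ = ∑ x ∈ S, p.derivative.roots.count x + S.card := by
        rw [Finset.sum_add_distrib, Finset.card_eq_sum_ones]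
    _ ≤ ∑ x ∈ S, p.derivative.roots.count x + ((T \ S).card + 1) := by
        gcongr
        exact card_roots_toFinset_le_card_roots_derivative_sdiff_roots_succ p
    _ ≤ ∑ x ∈ S, p.derivative.roots.count x +
          ∑ x ∈ T \ S, p.derivative.roots.count x := by
        gcongr
        refine Finset.card_add_one_le_sum_of_two_le (fun x hx => ?_) haTS (by rwa [count_roots])
        exact Multiset.one_le_count_iff_mem.2 <|
          Multiset.mem_toFinset.1 (Finset.mem_sdiff.1 hx).1
    _ = Multiset.card p.derivative.roots := by
        rw [← Finset.sum_union Finset.disjoint_sdiff, Finset.union_sdiff_self_eq_union]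
        exact Multiset.sum_count_eq_card fun x hx =>
          Finset.mem_union_right _ (Multiset.mem_toFinset.2 hx)

namespace Splits

variable {p : ℝ[X]}

theorem derivative_of_real (hp : p.Splits) : p.derivative.Splits := by
  rw [splits_iff_card_roots] at hp ⊢
  have := card_roots_le_derivative p
  have := card_roots' p.derivative
  have := natDegree_derivative_le p
  omega

theorem isRoot_of_two_le_rootMultiplicity_derivative (hp : p.Splits) {a : ℝ}
    (ha : 2 ≤ p.derivative.rootMultiplicity a) : p.IsRoot a := by
  by_contra hpa
  have hp' : p.derivative ≠ 0 := by rintro h; simp [h] at ha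
  have hdeg : p.natDegree ≠ 0 := fun h => hp' (derivative_of_natDegree_zero h)
  have := card_roots_le_card_roots_derivative_of_two_le_rootMultiplicity hpa ha
  have := card_roots' p.derivative
  have := natDegree_derivative_lt hdeg
  rw [splits_iff_card_roots.1 hp] at *
  omega

theorem two_le_rootMultiplicity_of_iterate_derivative (hp : p.Splits) {a : ℝ} {k : ℕ}
    (h : 2 ≤ (derivative^[k] p).rootMultiplicity a) : 2 ≤ p.rootMultiplicity a := by
  induction k generalizing p with
  | zero => simpa using h
  | succ k ih =>
    have h' := ih hp.derivative_of_real (by rwa [← Function.iterate_succ_apply])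
    have := derivative_rootMultiplicity_of_root <|
      hp.isRoot_of_two_le_rootMultiplicity_derivative h'
    omega

end Splits

end Polynomial

theorem stmt_3_general (n : ℕ)
    (x : Fin n → ℤ) (hx : ∀ i, x i ≠ 0)
    (Q : Polynomial ℤ) (hQ : Q = ∏ i, (X - C (x i))) :
    ¬ ∃ j : ℕ, 1 ≤ j ∧ j ≤ n - 1 ∧ Q.coeff (n - j) = 0 ∧ Q.coeff (n - (j + 1)) = 0 := by
  rintro ⟨j, hj1, hjn, hc1, hc2⟩
  set m := n - (j + 1)
  set P : ℝ[X] := Q.map (Int.castRingHom ℝ)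
  have hP : P = ∏ i, (X - C (x i : ℝ)) := by simp [P, hQ, Polynomial.map_prod]
  have hP0 : P ≠ 0 := hP ▸ (monic_prod_of_monic _ _ fun i _ => monic_X_sub_C _).ne_zero
  have hPdeg : P.natDegree = n := by
    rw [hP, natDegree_finsetProd_X_sub_C_eq_card, Finset.card_univ, Fintype.card_fin]
  have hdvd : X ^ 2 ∣ derivative^[m] P := by
    refine X_pow_dvd_iterate_derivative fun d hd => ?_
    interval_cases d
    · simp [P, hc2]
    · simp [P, show 1 + m = n - j by omega, hc1]
  have hmult : 2 ≤ (derivative^[m] P).rootMultiplicity 0 := by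
    rw [le_rootMultiplicity_iff (iterate_derivative_ne_zero hP0 (by omega)), map_zero, sub_zero]
    exact hdvd
  have hPsplits : P.Splits := hP ▸ Splits.prod fun i _ => Splits.X_sub_C _
  have hdouble := hPsplits.two_le_rootMultiplicity_of_iterate_derivative hmult
  have hroot : P.IsRoot 0 := (rootMultiplicity_pos hP0).1 (by omega)
  simp [hP, eval_prod, Finset.prod_eq_zero_iff, hx] at hroot

theorem stmt_3 (n : ℕ) (hn : 2 ≤ n)
    (x : Fin n → ℤ) (hx : ∀ i, x i ≠ 0)
    (Q : Polynomial ℤ) (hQ : Q = ∏ i, (X - C (x i))) :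
    ¬ ∃ j : ℕ, 1 ≤ j ∧ j ≤ n - 1 ∧ Q.coeff (n - j) = 0 ∧ Q.coeff (n - (j + 1)) = 0 :=
  stmt_3_general n x hx Q hQ
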